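/- arXiv:1412.8499 — 2 statements merged into one kernel-verified Lean document; each statement's English description precedes it below -/
import Mathlib

section
/- Existence of the weight filtration: for every K-linear endomorphism N of a finite-dimensional K-vector space V satisfying N^{n+1} = 0, there exists a weight filtration centered at n for N. -/
/-- `W` is a weight filtration centered at `n` for the endomorphism `N` of `V`:
an increasing filtration `W₀ ⊆ W₁ ⊆ ⋯ ⊆ W_{2n} = V` (with `W_i = 0` for `i < 0` and
`W_i = V` for `i ≥ 2n`) such that `N (W_i) ⊆ W_{i-2}` for `i ≥ 2` and, for every `k ≥ 0`,
`N^k` induces an isomorphism `Gr^W_{n+k} → Gr^W_{n-k}` on graded pieces (expressed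
elementwise: `N^k` maps `W_{n+k}` into `W_{n-k}`, the induced map on graded pieces is
injective, and it is surjective). -/
def IsWeightFiltration {K V : Type*} [Field K] [AddCommGroup V] [Module K V]
    (n : ℕ) (N : V →ₗ[K] V) (W : ℤ → Submodule K V) : Prop :=
  Monotone W ∧
  (∀ i : ℤ, i < 0 → W i = ⊥) ∧
  (∀ i : ℤ, 2 * (n : ℤ) ≤ i → W i = ⊤) ∧
  (∀ i : ℤ, 2 ≤ i → ∀ x ∈ W i, N x ∈ W (i - 2)) ∧
  (∀ k : ℕ, ∀ x ∈ W ((n : ℤ) + k), (N ^ k) x ∈ W ((n : ℤ) - k)) ∧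
  (∀ k : ℕ, ∀ x ∈ W ((n : ℤ) + k),
      (N ^ k) x ∈ W ((n : ℤ) - k - 1) → x ∈ W ((n : ℤ) + k - 1)) ∧
  (∀ k : ℕ, ∀ y ∈ W ((n : ℤ) - k),
      ∃ x ∈ W ((n : ℤ) + k), y - (N ^ k) x ∈ W ((n : ℤ) - k - 1))

universe u v

/-- Auxiliary existence statement, proved by induction on the nilpotency order, following
Deligne's inductive construction of the monodromy (weight) filtration.  The statement is
strengthened by the extra condition that `N` maps `W i` into `W (i - 2)` for *all* `i`. -/
theorem weight_filtration_aux {K : Type u} [Field K] (n : ℕ) :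
    ∀ (V : Type v) [AddCommGroup V] [Module K V] (N : V →ₗ[K] V), N ^ (n + 1) = 0 →
      ∃ W : ℤ → Submodule K V,
        (∀ i : ℤ, ∀ x ∈ W i, N x ∈ W (i - 2)) ∧ IsWeightFiltration n N W := by
  induction n with
  | zero =>
    intro V _ _ N hN
    rw [pow_one] at hN
    set W : ℤ → Submodule K V := fun i => if i < 0 then ⊥ else ⊤ with hWdef
    have hmem : ∀ (i : ℤ) (x : V), x ∈ W i ↔ (i < 0 → x = 0) := by
      intro i x
      by_cases h : i < 0
      · simp [hWdef, h]
      · simp [hWdef, h]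
    have hNz : ∀ x : V, N x = 0 := fun x => by rw [hN]; rfl
    refine ⟨W, ?_, ?_, ?_, ?_, ?_, ?_, ?_, ?_⟩
    · intro i x _
      rw [hmem]
      intro _
      exact hNz x
    · intro i j hij x hx
      rw [hmem] at hx ⊢
      intro hj
      exact hx (by omega)
    · intro i hi
      ext x
      rw [hmem]
      simp [hi]
    · intro i hi
      ext x
      rw [hmem]
      simp only [Submodule.mem_top, iff_true]
      intro h
      push_cast at hi
      omega
    · intro i _ x _
      rw [hmem]
      intro _
      exact hNz x
    · intro k x hx
      cases k with
      | zero => simpa using hx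
      | succ k =>
        have h0 : N ^ (k + 1) = 0 := by rw [hN]; exact zero_pow (Nat.succ_ne_zero k)
        rw [h0]
        simp only [LinearMap.zero_apply]
        rw [hmem]
        intro _
        rfl
    · intro k x hx hNx
      rw [hmem] at hx hNx ⊢
      intro hlt
      have hk : k = 0 := by push_cast at hlt; omega
      subst hk
      have := hNx (by omega)
      simpa using this
    · intro k y hy
      rw [hmem] at hy
      by_cases hk : k = 0
      · subst hk
        refine ⟨y, ?_, ?_⟩
        · rw [hmem]; intro h; exact absurd h (by omega)
        · rw [hmem]; intro _; simp
      · have hy0 : y = 0 := hy (by push_cast; omega)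
        subst hy0
        refine ⟨0, ?_, ?_⟩
        · rw [hmem]; intro _; rfl
        · rw [hmem]; intro _; simp
  | succ n IH =>
    intro V _ _ N hN
    have hpowtop : N ^ (n + 1 + 1) = 0 := hN
    set Kn : Submodule K V := LinearMap.ker (N ^ (n + 1)) with hKn
    set Rn : Submodule K V := LinearMap.range (N ^ (n + 1)) with hRn
    have hmemK : ∀ x : V, x ∈ Kn ↔ (N ^ (n + 1)) x = 0 := fun x => LinearMap.mem_ker
    have hmemR : ∀ x : V, x ∈ Rn ↔ ∃ v, (N ^ (n + 1)) v = x := fun x => LinearMap.mem_range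
    have hswap : ∀ w : V, N ((N ^ (n + 1)) w) = (N ^ (n + 1)) (N w) := by
      intro w
      rw [← Module.End.mul_apply, ← pow_succ', pow_succ, Module.End.mul_apply]
    have hNxK : ∀ x : V, N x ∈ Kn := by
      intro x
      rw [hmemK, ← Module.End.mul_apply, ← pow_succ, hpowtop]
      rfl
    have hRK : Rn ≤ Kn := by
      rintro _ ⟨v, rfl⟩
      rw [hmemK, ← Module.End.mul_apply, ← pow_add]
      have h2 : n + 1 + (n + 1) = n + 1 + 1 + n := by ring
      rw [h2, pow_add, hpowtop, zero_mul]
      rfl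
    have hNK : ∀ x ∈ Kn, N x ∈ Kn := fun x _ => hNxK x
    set p : Submodule K Kn := Submodule.comap Kn.subtype Rn with hp
    have hmemp : ∀ x : Kn, x ∈ p ↔ (x : V) ∈ Rn := by
      intro x
      rw [hp, Submodule.mem_comap, Submodule.subtype_apply]
    set Nr : Kn →ₗ[K] Kn := N.restrict hNK with hNr
    have hNrapp : ∀ x : Kn, ((Nr x : Kn) : V) = N (x : V) := fun x =>
      LinearMap.restrict_coe_apply N hNK x
    have hNrpow : ∀ (k : ℕ) (x : Kn), (((Nr ^ k) x : Kn) : V) = (N ^ k) (x : V) := by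
      intro k
      induction k with
      | zero => intro x; simp
      | succ k ih =>
        intro x
        rw [pow_succ, pow_succ, Module.End.mul_apply, Module.End.mul_apply, ih (Nr x), hNrapp]
    have hKpow : ∀ (k : ℕ) (x : V), x ∈ Kn → (N ^ k) x ∈ Kn := by
      intro k x hx
      have := ((Nr ^ k) ⟨x, hx⟩).2
      rwa [hNrpow k ⟨x, hx⟩] at this
    have hple : p ≤ Submodule.comap Nr p := by
      intro x hx
      rw [Submodule.mem_comap, hmemp, hNrapp]
      rw [hmemp] at hx
      obtain ⟨v, hv⟩ := hx
      exact ⟨N v, by rw [← hv, hswap]⟩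
    set N' : (Kn ⧸ p) →ₗ[K] (Kn ⧸ p) := Submodule.mapQ p p Nr hple with hN'def
    have hmkN : ∀ (k : ℕ) (x : Kn),
        (N' ^ k) (Submodule.Quotient.mk x) = Submodule.Quotient.mk ((Nr ^ k) x) := by
      intro k
      induction k with
      | zero => intro x; simp
      | succ k ih =>
        intro x
        rw [pow_succ', Module.End.mul_apply, ih, hN'def, Submodule.mapQ_apply,
          pow_succ', Module.End.mul_apply]
    have hN'nil : N' ^ (n + 1) = 0 := by
      apply LinearMap.ext
      intro q
      obtain ⟨x, rfl⟩ := Submodule.Quotient.mk_surjective p q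
      rw [hmkN, LinearMap.zero_apply, Submodule.Quotient.mk_eq_zero, hmemp, hNrpow,
        (hmemK (x : V)).mp x.2]
      exact zero_mem Rn
    obtain ⟨W', hE', hM', hB', hT', h4', h5', h6', h7'⟩ := IH (Kn ⧸ p) N' hN'nil
    have hKer' : ∀ z : Kn ⧸ p, (N' ^ n) z = 0 → z ∈ W' (2 * (n : ℤ) - 1) := by
      intro z hz
      have h1 : z ∈ W' ((n : ℤ) + (n : ℕ)) := by
        rw [hT' _ (by push_cast; omega)]
        trivial
      have h2 := h6' n z h1 (by rw [hz]; exact zero_mem _)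
      rw [show 2 * (n : ℤ) - 1 = (n : ℤ) + (n : ℕ) - 1 by push_cast; ring]
      exact h2
    have hRange' : ∀ z ∈ W' 0, ∃ u : Kn, z = (N' ^ n) (Submodule.Quotient.mk u) := by
      intro z hz
      have h1 : z ∈ W' ((n : ℤ) - (n : ℕ)) := by
        rw [show (n : ℤ) - (n : ℕ) = 0 by push_cast; ring]
        exact hz
      obtain ⟨x, hx, hsub⟩ := h7' n z h1
      have hz0 : z - (N' ^ n) x = 0 := by
        rw [hB' ((n : ℤ) - (n : ℕ) - 1) (by push_cast; omega), Submodule.mem_bot] at hsub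
        exact hsub
      obtain ⟨u, rfl⟩ := Submodule.Quotient.mk_surjective p x
      exact ⟨u, by rw [← sub_eq_zero]; exact hz0⟩
    set W : ℤ → Submodule K V := fun i =>
      if i < 0 then ⊥ else if 2 * ((n : ℤ) + 1) ≤ i then ⊤
      else Submodule.map Kn.subtype (Submodule.comap p.mkQ (W' (i - 1))) with hWdef
    have hWbot : ∀ i : ℤ, i < 0 → W i = ⊥ := by
      intro i h
      rw [hWdef]
      simp only
      rw [if_pos h]
    have hWtop : ∀ i : ℤ, 2 * ((n : ℤ) + 1) ≤ i → W i = ⊤ := by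
      intro i h
      rw [hWdef]
      simp only
      rw [if_neg (by omega), if_pos h]
    have hWmid : ∀ i : ℤ, 0 ≤ i → i < 2 * ((n : ℤ) + 1) →
        W i = Submodule.map Kn.subtype (Submodule.comap p.mkQ (W' (i - 1))) := by
      intro i h1 h2
      rw [hWdef]
      simp only
      rw [if_neg (by omega), if_neg (by omega)]
    have hWI : ∀ (i : ℤ) (x : V), 0 ≤ i → i < 2 * ((n : ℤ) + 1) → ∀ hx : x ∈ Kn,
        p.mkQ ⟨x, hx⟩ ∈ W' (i - 1) → x ∈ W i := by
      intro i x h1 h2 hx hq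
      rw [hWmid i h1 h2]
      exact ⟨⟨x, hx⟩, hq, rfl⟩
    have hWE : ∀ (i : ℤ) (x : V), 0 ≤ i → i < 2 * ((n : ℤ) + 1) → x ∈ W i →
        ∃ hx : x ∈ Kn, p.mkQ ⟨x, hx⟩ ∈ W' (i - 1) := by
      intro i x h1 h2 hx
      rw [hWmid i h1 h2] at hx
      obtain ⟨⟨y, hy⟩, hq, rfl⟩ := hx
      exact ⟨hy, hq⟩
    -- the extra condition : `N` maps `W i` into `W (i-2)` for every `i`
    have hExtra : ∀ i : ℤ, ∀ x ∈ W i, N x ∈ W (i - 2) := by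
      intro i x hx
      by_cases h0 : i < 0
      · rw [hWbot i h0, Submodule.mem_bot] at hx
        subst hx
        rw [map_zero]
        exact zero_mem _
      push_neg at h0
      by_cases h2 : i < 2 * ((n : ℤ) + 1)
      · obtain ⟨hxK, hq⟩ := hWE i x h0 h2 hx
        by_cases hi0 : i = 0
        · subst hi0
          have hxR : x ∈ Rn := by
            rw [show (0 : ℤ) - 1 = -1 by ring, hB' (-1) (by omega), Submodule.mem_bot,
              Submodule.mkQ_apply, Submodule.Quotient.mk_eq_zero, hmemp] at hq
            exact hq
          obtain ⟨v, hv⟩ := hxR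
          rw [← hv, ← Module.End.mul_apply, ← pow_succ', hpowtop, LinearMap.zero_apply]
          exact zero_mem _
        by_cases hi1 : i = 1
        · subst hi1
          rw [show (1 : ℤ) - 1 = 0 by ring] at hq
          obtain ⟨u, hu⟩ := hRange' _ hq
          rw [hmkN, Submodule.mkQ_apply] at hu
          have hd : (⟨x, hxK⟩ - (Nr ^ n) u : Kn) ∈ p := (Submodule.Quotient.eq p).mp hu
          rw [hmemp] at hd
          obtain ⟨v, hv⟩ := hd
          have hvv : x - (N ^ n) (u : V) = (N ^ (n + 1)) v := by
            rw [hv]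
            push_cast [hNrpow]
            ring
          have hxval : x = (N ^ n) (u : V) + (N ^ (n + 1)) v := by
            rw [← hvv]; abel
          have e1 : N ((N ^ n) (u : V)) = 0 := by
            rw [← Module.End.mul_apply, ← pow_succ']
            exact (hmemK (u : V)).mp u.2
          have e2 : N ((N ^ (n + 1)) v) = 0 := by
            rw [← Module.End.mul_apply, ← pow_succ', hpowtop]
            rfl
          rw [hxval, map_add, e1, e2, add_zero]
          exact zero_mem _
        · have h2i : 2 ≤ i := by omega
          refine hWI (i - 2) (N x) (by omega) (by omega) (hNxK x) ?_
          have hq2 := hE' (i - 1) _ hq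
          have heq : p.mkQ ⟨N x, hNxK x⟩ = N' (p.mkQ ⟨x, hxK⟩) := by
            rw [Submodule.mkQ_apply, Submodule.mkQ_apply, hN'def, Submodule.mapQ_apply]
            exact congrArg _ (Subtype.ext (hNrapp ⟨x, hxK⟩).symm)
          rw [heq, show i - 2 - 1 = i - 1 - 2 by ring]
          exact hq2
      · push_neg at h2
        by_cases h3 : 2 * ((n : ℤ) + 1) + 2 ≤ i
        · rw [hWtop (i - 2) (by omega)]
          trivial
        by_cases h4 : i = 2 * ((n : ℤ) + 1) + 1
        · subst h4
          refine hWI _ _ (by omega) (by omega) (hNxK x) ?_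
          rw [hT' _ (by push_cast; omega)]
          trivial
        · have h5 : i = 2 * ((n : ℤ) + 1) := by omega
          subst h5
          refine hWI _ _ (by omega) (by omega) (hNxK x) ?_
          rw [show 2 * ((n : ℤ) + 1) - 2 - 1 = 2 * (n : ℤ) - 1 by ring]
          apply hKer'
          rw [Submodule.mkQ_apply, hmkN, Submodule.Quotient.mk_eq_zero, hmemp, hNrpow]
          refine ⟨x, ?_⟩
          rw [pow_succ, Module.End.mul_apply]
    have hMono : Monotone W := by
      apply monotone_int_of_le_succ
      intro i
      by_cases h0 : i < 0
      · rw [hWbot i h0]; exact bot_le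
      by_cases h2 : 2 * ((n : ℤ) + 1) ≤ i
      · rw [hWtop i h2, hWtop (i + 1) (by omega)]
      by_cases h3 : i + 1 = 2 * ((n : ℤ) + 1)
      · rw [hWtop (i + 1) (by omega)]
        exact le_top
      · rw [hWmid i (by omega) (by omega), hWmid (i + 1) (by omega) (by omega)]
        exact Submodule.map_mono (Submodule.comap_mono (hM' (by omega)))
    have hIter : ∀ (k : ℕ) (i : ℤ) (x : V), x ∈ W i → (N ^ k) x ∈ W (i - 2 * k) := by
      intro k
      induction k with
      | zero => intro i x hx; simpa using hx
      | succ k ih =>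
        intro i x hx
        have h2 := ih (i - 2) (N x) (hExtra i x hx)
        rw [pow_succ, Module.End.mul_apply,
          show i - 2 * ((k + 1 : ℕ) : ℤ) = i - 2 - 2 * (k : ℕ) by push_cast; ring]
        exact h2
    refine ⟨W, hExtra, hMono, hWbot, ?_, ?_, ?_, ?_, ?_⟩
    · intro i hi
      exact hWtop i (by push_cast at hi ⊢; omega)
    · intro i _ x hx
      exact hExtra i x hx
    · intro k x hx
      have h := hIter k _ x hx
      rw [show ((n + 1 : ℕ) : ℤ) - (k : ℕ) = ((n + 1 : ℕ) : ℤ) + (k : ℕ) - 2 * (k : ℕ) by ring]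
      exact h
    · -- injectivity on graded pieces
      intro k x hx hNx
      by_cases hk0 : k = 0
      · subst hk0
        simp only [pow_zero, Module.End.one_apply] at hNx
        rw [show ((n + 1 : ℕ) : ℤ) + ((0 : ℕ) : ℤ) - 1 = ((n + 1 : ℕ) : ℤ) - ((0 : ℕ) : ℤ) - 1 by
          push_cast; ring]
        exact hNx
      by_cases hkbig : n + 1 + 1 ≤ k
      · rw [hWtop _ (by push_cast; omega)]
        trivial
      by_cases hkeq : k = n + 1
      · subst hkeq
        rw [hWbot _ (by push_cast; omega), Submodule.mem_bot] at hNx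
        refine hWI _ _ (by push_cast; omega) (by push_cast; omega) ((hmemK x).mpr hNx) ?_
        rw [hT' _ (by push_cast; omega)]
        trivial
      · have hk1 : 1 ≤ k := by omega
        have hkn : k ≤ n := by omega
        obtain ⟨hxK, hq⟩ := hWE _ x (by push_cast; omega) (by push_cast; omega) hx
        obtain ⟨hxK2, hq2⟩ := hWE _ _ (by push_cast; omega) (by push_cast; omega) hNx
        have heq : p.mkQ ⟨(N ^ k) x, hxK2⟩ = (N' ^ k) (p.mkQ ⟨x, hxK⟩) := by
          rw [Submodule.mkQ_apply, Submodule.mkQ_apply, hmkN]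
          exact congrArg _ (Subtype.ext (hNrpow k ⟨x, hxK⟩).symm)
        have h1' : p.mkQ ⟨x, hxK⟩ ∈ W' ((n : ℤ) + (k : ℕ)) := by
          rw [show (n : ℤ) + (k : ℕ) = ((n + 1 : ℕ) : ℤ) + (k : ℕ) - 1 by push_cast; ring]
          exact hq
        have h2' : (N' ^ k) (p.mkQ ⟨x, hxK⟩) ∈ W' ((n : ℤ) - (k : ℕ) - 1) := by
          rw [← heq, show (n : ℤ) - (k : ℕ) - 1 = ((n + 1 : ℕ) : ℤ) - (k : ℕ) - 1 - 1 by
            push_cast; ring]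
          exact hq2
        have h3' := h6' k _ h1' h2'
        refine hWI _ _ (by push_cast; omega) (by push_cast; omega) hxK ?_
        rw [show ((n + 1 : ℕ) : ℤ) + (k : ℕ) - 1 - 1 = (n : ℤ) + (k : ℕ) - 1 by push_cast; ring]
        exact h3'
    · -- surjectivity on graded pieces
      intro k y hy
      by_cases hk0 : k = 0
      · subst hk0
        refine ⟨y, ?_, ?_⟩
        · rw [show ((n + 1 : ℕ) : ℤ) + ((0 : ℕ) : ℤ) = ((n + 1 : ℕ) : ℤ) - ((0 : ℕ) : ℤ) by
            push_cast; ring]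
          exact hy
        · simp only [pow_zero, Module.End.one_apply, sub_self]
          exact zero_mem _
      by_cases hkbig : n + 1 + 1 ≤ k
      · rw [hWbot _ (by push_cast; omega), Submodule.mem_bot] at hy
        subst hy
        refine ⟨0, zero_mem _, ?_⟩
        rw [map_zero, sub_zero]
        exact zero_mem _
      by_cases hkeq : k = n + 1
      · subst hkeq
        obtain ⟨hyK, hq⟩ := hWE _ y (by push_cast; omega) (by push_cast; omega) hy
        have hyR : y ∈ Rn := by
          rw [show ((n + 1 : ℕ) : ℤ) - ((n + 1 : ℕ) : ℤ) - 1 = -1 by ring, hB' (-1) (by omega),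
            Submodule.mem_bot, Submodule.mkQ_apply, Submodule.Quotient.mk_eq_zero, hmemp] at hq
          exact hq
        obtain ⟨v, hv⟩ := hyR
        refine ⟨v, ?_, ?_⟩
        · rw [hWtop _ (by push_cast; omega)]
          trivial
        · rw [hv]
          simp only [sub_self]
          exact zero_mem _
      · have hk1 : 1 ≤ k := by omega
        have hkn : k ≤ n := by omega
        obtain ⟨hyK, hq⟩ := hWE _ y (by push_cast; omega) (by push_cast; omega) hy
        have hq' : p.mkQ ⟨y, hyK⟩ ∈ W' ((n : ℤ) - (k : ℕ)) := by
          rw [show (n : ℤ) - (k : ℕ) = ((n + 1 : ℕ) : ℤ) - (k : ℕ) - 1 by push_cast; ring]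
          exact hq
        obtain ⟨ξ, hξ, hsub⟩ := h7' k _ hq'
        obtain ⟨xt, rfl⟩ := Submodule.Quotient.mk_surjective p ξ
        refine ⟨(xt : V), ?_, ?_⟩
        · refine hWI _ _ (by push_cast; omega) (by push_cast; omega) xt.2 ?_
          rw [show ((n + 1 : ℕ) : ℤ) + (k : ℕ) - 1 = (n : ℤ) + (k : ℕ) by push_cast; ring,
            Submodule.mkQ_apply]
          exact hξ
        · have hsubK : y - (N ^ k) (xt : V) ∈ Kn := sub_mem hyK (hKpow k _ xt.2)
          refine hWI _ _ (by push_cast; omega) (by push_cast; omega) hsubK ?_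
          have heq2 : p.mkQ ⟨y - (N ^ k) (xt : V), hsubK⟩ =
              p.mkQ ⟨y, hyK⟩ - (N' ^ k) (Submodule.Quotient.mk xt) := by
            rw [hmkN, Submodule.mkQ_apply, Submodule.mkQ_apply, ← Submodule.Quotient.mk_sub]
            refine congrArg _ (Subtype.ext ?_)
            push_cast [hNrpow]
            ring
          rw [show ((n + 1 : ℕ) : ℤ) - (k : ℕ) - 1 - 1 = (n : ℤ) - (k : ℕ) - 1 by push_cast; ring,
            heq2]
          exact hsub

/-- Existence of the weight filtration: for every `K`-linear endomorphism `N` of a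
finite-dimensional `K`-vector space `V` satisfying `N ^ (n + 1) = 0`, there exists a
weight filtration centered at `n` for `N`. -/
theorem exists_weight_filtration {K V : Type*} [Field K] [AddCommGroup V] [Module K V]
    [FiniteDimensional K V] (n : ℕ) (N : V →ₗ[K] V) (hN : N ^ (n + 1) = 0) :
    ∃ W : ℤ → Submodule K V, IsWeightFiltration n N W := by
  obtain ⟨W, _, hW⟩ := weight_filtration_aux n V N hN
  exact ⟨W, hW⟩
end

section
/- From an opposed filtration to a Hodge decomposition: let (H, σ) be a finite-dimensional complex vector space with real structure, n an integer, and let (F^p)_{p∈ℤ} be a decreasing filtration of H by complex subspaces with F^p = H for p sufficiently small and F^p = 0 for p sufficiently large, such that H = F^p ⊕ σ(F^{n−p+1}) for every integer p. For p+q = n set H^{p,q} := F^p ∩ σ(F^q). Then H = ⊕_{p+q=n} H^{p,q} is a Hodge decomposition of weight n on (H, σ) (in particular σ(H^{p,q}) = H^{q,p}), and F^p = ⊕_{r≥p} H^{r,n−r} for every integer p. -/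
/-- From an opposed filtration to a Hodge decomposition: let `σ` be a real structure on a
finite-dimensional complex vector space `H` (additive, conjugate-linear, involutive), let
`n` be an integer and `F` a decreasing filtration of `H` by complex subspaces, exhaustive
(`F p = ⊤` for `p` small) and separated (`F p = ⊥` for `p` large), such that
`H = F^p ⊕ σ (F^{n-p+1})` for every `p`. Setting `H^{p,q} := F^p ∩ σ (F^q)` for
`p + q = n` (recorded by `Hpq p = F p ⊓ σ (F (n-p))`), one gets a Hodge decomposition of
weight `n` on `(H, σ)`: `H = ⊕_{p+q=n} H^{p,q}` with `σ (H^{p,q}) = H^{q,p}`, and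
`F p = ⊕_{a ≥ p} H^{a,n-a}` for every `p`. -/
theorem opposed_filtration_hodge_decomposition
    {H : Type*} [AddCommGroup H] [Module ℂ H] [FiniteDimensional ℂ H]
    (σ : H → H)
    (hσadd : ∀ x y : H, σ (x + y) = σ x + σ y)
    (hσsmul : ∀ (c : ℂ) (x : H), σ (c • x) = (starRingEnd ℂ c) • σ x)
    (hσinv : ∀ x : H, σ (σ x) = x)
    (n : ℤ) (F : ℤ → Submodule ℂ H)
    (hdecr : Antitone F)
    (htop : ∃ a : ℤ, ∀ p : ℤ, p ≤ a → F p = ⊤)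
    (hbot : ∃ b : ℤ, ∀ p : ℤ, b ≤ p → F p = ⊥)
    (hopp : ∀ p : ℤ, IsCompl (F p) (Submodule.span ℂ (σ '' (F (n - p + 1) : Set H))))
    (Hpq : ℤ → Submodule ℂ H)
    (hHpq : ∀ p : ℤ, Hpq p = F p ⊓ Submodule.span ℂ (σ '' (F (n - p) : Set H))) :
    DirectSum.IsInternal Hpq ∧
    (∀ p : ℤ, σ '' (Hpq p : Set H) = (Hpq (n - p) : Set H)) ∧
    (∀ p : ℤ, F p = ⨆ a : ℤ, ⨆ _ : p ≤ a, Hpq a) := by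
  classical
  have hσ0 : σ 0 = 0 := by
    have h := hσadd 0 0
    rw [add_zero] at h
    exact (left_eq_add.mp h)
  -- membership in the "conjugate" of a submodule
  have hmemτ : ∀ (S : Submodule ℂ H) (x : H),
      x ∈ Submodule.span ℂ (σ '' (S : Set H)) ↔ σ x ∈ S := by
    intro S x
    constructor
    · intro hx
      induction hx using Submodule.span_induction with
      | mem y hy =>
        obtain ⟨s, hs, rfl⟩ := hy
        rw [hσinv]; exact hs
      | zero => rw [hσ0]; exact S.zero_mem
      | add y z _ _ hy hz => rw [hσadd]; exact S.add_mem hy hz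
      | smul c y _ hy => rw [hσsmul]; exact S.smul_mem _ hy
    · intro hx
      exact Submodule.subset_span ⟨σ x, hx, hσinv x⟩
  set τ : Submodule ℂ H → Submodule ℂ H :=
    fun S => Submodule.span ℂ (σ '' (S : Set H)) with hτdef
  have hτmono : ∀ S T : Submodule ℂ H, S ≤ T → τ S ≤ τ T := by
    intro S T hST x hx
    rw [hτdef, hmemτ] at hx ⊢
    exact hST hx
  -- hopp restated
  have hopp' : ∀ p : ℤ, IsCompl (F p) (τ (F (n - p + 1))) := hopp
  have hHpq' : ∀ p : ℤ, Hpq p = F p ⊓ τ (F (n - p)) := hHpq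
  -- step: F p = Hpq p ⊔ F (p+1)
  have hcompl : ∀ p : ℤ, IsCompl (F (p + 1)) (τ (F (n - p))) := by
    intro p
    have := hopp' (p + 1)
    have he : n - (p + 1) + 1 = n - p := by ring
    rwa [he] at this
  have hstep : ∀ p : ℤ, F p = Hpq p ⊔ F (p + 1) := by
    intro p
    have h1 : F (p + 1) ⊔ τ (F (n - p)) = ⊤ := (hcompl p).sup_eq_top
    have h2 : F (p + 1) ≤ F p := hdecr (by omega)
    calc F p = (F (p + 1) ⊔ τ (F (n - p))) ⊓ F p := by rw [h1, top_inf_eq]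
    _ = F (p + 1) ⊔ (τ (F (n - p)) ⊓ F p) := sup_inf_assoc_of_le _ h2
    _ = Hpq p ⊔ F (p + 1) := by rw [hHpq' p, inf_comm, sup_comm]
  -- Hpq a ≤ F a and Hpq a ≤ τ (F (n - a))
  have hHF : ∀ a : ℤ, Hpq a ≤ F a := fun a => by rw [hHpq' a]; exact inf_le_left
  have hHτ : ∀ a : ℤ, Hpq a ≤ τ (F (n - a)) := fun a => by rw [hHpq' a]; exact inf_le_right
  obtain ⟨b, hb⟩ := hbot
  -- the filtration formula
  have hsup_split : ∀ p : ℤ,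
      (⨆ a : ℤ, ⨆ _ : p ≤ a, Hpq a) = Hpq p ⊔ ⨆ a : ℤ, ⨆ _ : p + 1 ≤ a, Hpq a := by
    intro p
    apply le_antisymm
    · apply iSup₂_le
      intro a ha
      rcases eq_or_lt_of_le ha with rfl | hlt
      · exact le_sup_left
      · exact le_trans (le_iSup₂ (f := fun a _ => Hpq a) a (by omega)) le_sup_right
    · apply sup_le
      · exact le_iSup₂ (f := fun a _ => Hpq a) p le_rfl
      · exact iSup₂_le fun a ha => le_iSup₂ (f := fun a _ => Hpq a) a (by omega)
  have hfilt : ∀ p : ℤ, F p = ⨆ a : ℤ, ⨆ _ : p ≤ a, Hpq a := by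
    have base : ∀ p : ℤ, b ≤ p → F p = ⨆ a : ℤ, ⨆ _ : p ≤ a, Hpq a := by
      intro p hp
      rw [hb p hp]
      symm
      apply le_bot_iff.mp
      apply iSup₂_le
      intro a ha
      refine le_trans (hHF a) ?_
      rw [hb a (by omega)]
    have key : ∀ k : ℕ, ∀ p : ℤ, b - k ≤ p → F p = ⨆ a : ℤ, ⨆ _ : p ≤ a, Hpq a := by
      intro k
      induction k with
      | zero => intro p hp; exact base p (by omega)
      | succ k ih =>
        intro p hp
        by_cases hcase : b - k ≤ p
        · exact ih p hcase
        · have hp1 : p = b - (k + 1 : ℕ) := by push_cast at hp hcase ⊢; omega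
          rw [hstep p, hsup_split p, ih (p + 1) (by omega)]
    intro p
    exact key (b - p).toNat p (by omega)
  -- supremum is everything
  have hsup_top : (⨆ a : ℤ, Hpq a) = ⊤ := by
    obtain ⟨a, hA⟩ := htop
    apply le_antisymm le_top
    rw [← hA a le_rfl, hfilt a]
    exact iSup₂_le fun c _ => le_iSup Hpq c
  -- independence
  have hindep : iSupIndep Hpq := by
    rw [iSupIndep_def]
    intro p
    rw [Submodule.disjoint_def]
    intro x hxp hxs
    have hsle : (⨆ (j : ℤ) (_ : j ≠ p), Hpq j) ≤ F (p + 1) ⊔ τ (F (n - p + 1)) := by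
      apply iSup₂_le
      intro a ha
      rcases lt_or_gt_of_ne ha with hlt | hgt
      · refine le_trans (hHτ a) (le_trans (hτmono _ _ (hdecr (by omega))) le_sup_right)
      · exact le_trans (hHF a) (le_trans (hdecr (by omega)) le_sup_left)
    obtain ⟨y, hy, z, hz, hyz⟩ := Submodule.mem_sup.mp (hsle hxs)
    have hxFp : x ∈ F p := hHF p hxp
    have hz0 : z = 0 := by
      have hzF : z ∈ F p := by
        have : z = x - y := by rw [← hyz]; abel
        rw [this]
        exact Submodule.sub_mem _ hxFp (hdecr (by omega) hy)
      exact (Submodule.disjoint_def.mp (hopp' p).disjoint) z hzF hz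
    have hxy : x = y := by rw [← hyz, hz0, add_zero]
    have hxτ : x ∈ τ (F (n - p)) := hHτ p hxp
    exact (Submodule.disjoint_def.mp (hcompl p).disjoint) x (hxy ▸ hy) hxτ
  refine ⟨DirectSum.isInternal_submodule_of_iSupIndep_of_iSup_eq_top hindep hsup_top, ?_, hfilt⟩
  -- conjugation symmetry
  intro p
  ext x
  constructor
  · rintro ⟨y, hy, rfl⟩
    rw [hHpq' p] at hy
    rw [SetLike.mem_coe, hHpq' (n - p)]
    refine ⟨?_, ?_⟩
    · exact (hmemτ _ y).mp hy.2
    · rw [hτdef]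
      refine (hmemτ _ (σ y)).mpr ?_
      rw [hσinv]
      have hsimp : n - (n - p) = p := by ring
      rw [hsimp]
      exact hy.1
  · intro hx
    rw [SetLike.mem_coe, hHpq' (n - p)] at hx
    refine ⟨σ x, ?_, hσinv x⟩
    rw [hHpq' p]
    constructor
    · have := hx.2
      rw [hτdef] at this
      have hsimp : n - (n - p) = p := by ring
      rw [hsimp] at this
      exact (hmemτ _ x).mp this
    · rw [hτdef]
      exact (hmemτ _ (σ x)).mpr ((hσinv x).symm ▸ hx.1)
end
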